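/- arXiv:0910.3362 — 2 statements merged into one kernel-verified Lean document; each statement's English description precedes it below -/
import Mathlib

section
/- Let (X,T) and (Y,S) be topological dynamical systems. Then: (1) if both X and Y have a dense set of minimal points, so does the product system (X×Y, T×S); (2) if X admits an invariant Borel probability measure with full support and Y has a dense set of recurrent points, then (X×Y, T×S) has a dense set of recurrent points; (3) there exist transitive t.d.s. (X,T) and (Y,S) such that (X×Y, T×S) does not have a dense set of recurrent points. -/
open Set Filter Topology Function

namespace PaperFormal

/-- The return-time set `N(x,U) = {n ∈ ℤ₊ : Tⁿ x ∈ U}`. -/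
def retTimes {X : Type} (T : X → X) (x : X) (U : Set X) : Set ℕ :=
  {n : ℕ | T^[n] x ∈ U}

/-- A point is recurrent if `N(x,U)` is infinite for every neighborhood `U` of `x`. -/
def RecurrentPt {X : Type} [TopologicalSpace X] (T : X → X) (x : X) : Prop :=
  ∀ U ∈ nhds x, (retTimes T x U).Infinite

/-- The (forward) orbit closure of a point. -/
def orbitClosure {X : Type} [TopologicalSpace X] (T : X → X) (x : X) : Set X :=
  closure (Set.range fun n : ℕ => T^[n] x)

/-- A pair `(x,y)` is proximal if `lim T^{nᵢ} x = lim T^{nᵢ} y` along some sequence `nᵢ`. -/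
def ProximalPair {X : Type} [TopologicalSpace X] (T : X → X) (x y : X) : Prop :=
  ∃ (u : ℕ → ℕ) (z : X),
    Tendsto (fun i => T^[u i] x) atTop (nhds z) ∧
    Tendsto (fun i => T^[u i] y) atTop (nhds z)

/-- A point `x` is distal if every `y` in its orbit closure proximal to `x` equals `x`. -/
def DistalPt {X : Type} [TopologicalSpace X] (T : X → X) (x : X) : Prop :=
  ∀ y ∈ orbitClosure T x, ProximalPair T x y → y = x

/-- `A` is a minimal set: nonempty, closed, invariant, with no proper such subset. -/
def IsMinimalSet {X : Type} [TopologicalSpace X] (T : X → X) (A : Set X) : Prop :=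
  A.Nonempty ∧ IsClosed A ∧ Set.MapsTo T A A ∧
    ∀ B ⊆ A, B.Nonempty → IsClosed B → Set.MapsTo T B B → B = A

/-- A point is minimal (almost periodic) if its orbit closure is a minimal set. -/
def IsMinimalPt {X : Type} [TopologicalSpace X] (T : X → X) (x : X) : Prop :=
  IsMinimalSet T (orbitClosure T x)

/-- A minimal system: no proper nonempty closed invariant subset. -/
def MinimalSys {X : Type} [TopologicalSpace X] (T : X → X) : Prop :=
  ∀ B : Set X, B.Nonempty → IsClosed B → Set.MapsTo T B B → B = Set.univ

/-- A transitive system: `N(U,V)` is infinite for all opene `U`, `V`. -/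
def TransitiveSys {X : Type} [TopologicalSpace X] (T : X → X) : Prop :=
  ∀ U V : Set X, IsOpen U → IsOpen V → U.Nonempty → V.Nonempty →
    {n : ℕ | (U ∩ T^[n] ⁻¹' V).Nonempty}.Infinite

/-- Transitivity of the subsystem on an invariant subset `A` (relative open sets). -/
def TransitiveOn {X : Type} [TopologicalSpace X] (T : X → X) (A : Set X) : Prop :=
  ∀ U V : Set X, IsOpen U → IsOpen V → (U ∩ A).Nonempty → (V ∩ A).Nonempty →
    {n : ℕ | (U ∩ A ∩ T^[n] ⁻¹' V).Nonempty}.Infinite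

/-- A transitive point: a point with dense forward orbit. -/
def TransPt {X : Type} [TopologicalSpace X] (T : X → X) (x : X) : Prop :=
  Dense (Set.range fun n : ℕ => T^[n] x)

/-- Finite sums of the sequence `p` over nonempty finite index sets contained in `[n,∞)`. -/
def FSfrom (p : ℕ → ℕ) (n : ℕ) : Set ℕ :=
  {m | ∃ α : Finset ℕ, α.Nonempty ∧ (∀ i ∈ α, n ≤ i) ∧ m = ∑ i ∈ α, p i}

/-- Finite sums of the sequence `p` over nonempty finite index sets. -/
def FS (p : ℕ → ℕ) : Set ℕ := FSfrom p 0

/-- An IP set: a set containing all finite sums of some sequence of natural numbers. -/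
def IPSet (A : Set ℕ) : Prop :=
  ∃ p : ℕ → ℕ, (∀ i, 0 < p i) ∧ FS p ⊆ A

/-- An IP* set: a set meeting every IP set. -/
def IPStar (A : Set ℕ) : Prop :=
  ∀ B : Set ℕ, IPSet B → (A ∩ B).Nonempty

/-- A syndetic set: a set with bounded gaps. -/
def Syndetic (S : Set ℕ) : Prop :=
  ∃ N : ℕ, ∀ m : ℕ, ∃ k ∈ S, m ≤ k ∧ k ≤ m + N

/-- A thick set: a set containing arbitrarily long runs of consecutive integers. -/
def Thick (S : Set ℕ) : Prop :=
  ∀ n : ℕ, ∃ m : ℕ, ∀ i ≤ n, m + i ∈ S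

/-- A piecewise syndetic set: an intersection of a syndetic set with a thick set. -/
def PiecewiseSyndetic (A : Set ℕ) : Prop :=
  ∃ S₁ S₂ : Set ℕ, Syndetic S₁ ∧ Thick S₂ ∧ A = S₁ ∩ S₂

/-- A thickly syndetic set: a set meeting every piecewise syndetic set. -/
def ThicklySyndetic (A : Set ℕ) : Prop :=
  ∀ B : Set ℕ, PiecewiseSyndetic B → (A ∩ B).Nonempty

/-- `x` is `F`-recurrent for the family `F` if `N(x,U) ∈ F` for every neighborhood `U`. -/
def FRecurrentPt {X : Type} [TopologicalSpace X] (F : Set (Set ℕ)) (T : X → X) (x : X) :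
    Prop :=
  ∀ U ∈ nhds x, retTimes T x U ∈ F

/-- `x` is `F`-product recurrent: `(x,y)` is recurrent for every `F`-recurrent point `y`
in any topological dynamical system `(Y,S)`. -/
def FProductRecurrent {X : Type} [TopologicalSpace X] (F : Set (Set ℕ)) (T : X → X)
    (x : X) : Prop :=
  ∀ (Y : Type) [MetricSpace Y] [CompactSpace Y] (S : Y → Y),
    Continuous S → Function.Surjective S →
      ∀ y : Y, FRecurrentPt F S y → RecurrentPt (Prod.map T S) (x, y)

/-- A joining of `(X,T)` and `(Y,S)`: a nonempty closed invariant subset of `X × Y`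
projecting onto both coordinates. -/
def Joining {X Y : Type} [TopologicalSpace X] [TopologicalSpace Y]
    (T : X → X) (S : Y → Y) (J : Set (X × Y)) : Prop :=
  J.Nonempty ∧ IsClosed J ∧ Set.MapsTo (Prod.map T S) J J ∧
    Prod.fst '' J = Set.univ ∧ Prod.snd '' J = Set.univ

/-- Two systems are disjoint if their only joining is the full product. -/
def DisjointSys {X Y : Type} [TopologicalSpace X] [TopologicalSpace Y]
    (T : X → X) (S : Y → Y) : Prop :=
  ∀ J : Set (X × Y), Joining T S J → J = Set.univ

/-- Property (★) of a point: for each neighborhood `V` of `x` there is `n` such that for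
every finite set `S` whose distinct elements are at distance `≥ n`, some common shift `ℓ`
puts all of `T^{s+ℓ} x`, `s ∈ S`, inside `V`. -/
def StarProp {X : Type} [TopologicalSpace X] (T : X → X) (x : X) : Prop :=
  ∀ V ∈ nhds x, ∃ n : ℕ, ∀ S : Finset ℕ,
    (∀ s ∈ S, ∀ t ∈ S, s < t → n ≤ t - s) →
      ∃ ℓ : ℕ, ∀ s ∈ S, T^[s + ℓ] x ∈ V

/-- `F` is an independence set for the pair `(U₀, U₁)`. -/
def IndepSet {X : Type} (T : X → X) (U₀ U₁ : Set X) (F : Set ℕ) : Prop :=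
  ∀ J : Finset ℕ, ↑J ⊆ F → J.Nonempty → ∀ s : ℕ → Bool,
    (⋂ j ∈ J, T^[j] ⁻¹' (if s j then U₁ else U₀)).Nonempty

/-!
(1) Given minimal points `x ∈ U` and `y ∈ V`, the product of their orbit closures `A × B`
contains a minimal set `M`, which projects onto `A`. Pick `(x, y') ∈ M`; minimality of `B` gives
`Sⁿ y' ∈ V`, and `(x, Sⁿ y')` is a minimal point since `id × Sⁿ` commutes with `T × S` and so
maps `M` onto a minimal set.

(2) By Baire's theorem, recurrent points are dense as soon as every nonempty open set returns
to itself at arbitrarily large times. For a box `D × W` with `y ∈ W` recurrent, the return times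
of `y` to `W` contain all differences `q j - q i` of some sequence `q`, and since the sets
`T^{-q i} D` all have measure `μ D > 0`, two of them meet.

(3) In the spacing shift of `P` (sequences whose `1`s are at mutual distances in `P`) the
returns of the cylinder `{x | x 0 = 1}` to itself happen at times in `P`, while the shift is
transitive as soon as `P` is thick. Two disjoint thick sets `P`, `Q` give transitive systems
whose product never returns to the product of these cylinders.
-/

section MinimalSets

variable {X : Type} [TopologicalSpace X] {T : X → X}

theorem orbitClosure_subset_of_mapsTo {M : Set X} (hM : IsClosed M) (hTM : MapsTo T M M)
    {x : X} (hx : x ∈ M) : orbitClosure T x ⊆ M :=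
  closure_minimal (range_subset_iff.2 fun n => hTM.iterate n hx) hM

theorem mapsTo_orbitClosure (hT : Continuous T) (x : X) :
    MapsTo T (orbitClosure T x) (orbitClosure T x) := by
  refine MapsTo.closure ?_ hT
  rintro - ⟨n, rfl⟩
  exact ⟨n + 1, iterate_succ_apply' T n x⟩

theorem IsMinimalSet.eq_of_subset {A B : Set X} (hA : IsMinimalSet T A) (hB : IsMinimalSet T B)
    (hBA : B ⊆ A) : B = A :=
  hA.2.2.2 B hBA hB.1 hB.2.1 hB.2.2.1

theorem IsMinimalSet.orbitClosure_eq (hT : Continuous T) {M : Set X} (hM : IsMinimalSet T M)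
    {z : X} (hz : z ∈ M) : orbitClosure T z = M :=
  hM.2.2.2 _ (orbitClosure_subset_of_mapsTo hM.2.1 hM.2.2.1 hz) ⟨z, subset_closure ⟨0, rfl⟩⟩
    isClosed_closure (mapsTo_orbitClosure hT z)

theorem IsMinimalSet.isMinimalPt (hT : Continuous T) {M : Set X} (hM : IsMinimalSet T M)
    {z : X} (hz : z ∈ M) : IsMinimalPt T z := by
  rw [IsMinimalPt, hM.orbitClosure_eq hT hz]
  exact hM

theorem IsMinimalSet.exists_iterate_mem (hT : Continuous T) {M : Set X}
    (hM : IsMinimalSet T M) {z : X} (hz : z ∈ M) {O : Set X} (hO : IsOpen O)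
    (hOM : (O ∩ M).Nonempty) : ∃ n, T^[n] z ∈ O := by
  obtain ⟨w, hwO, hwM⟩ := hOM
  rw [← hM.orbitClosure_eq hT hz] at hwM
  obtain ⟨-, hO', n, rfl⟩ := mem_closure_iff.1 hwM O hO hwO
  exact ⟨n, hO'⟩

theorem IsMinimalSet.image [CompactSpace X] {Y : Type} [TopologicalSpace Y] [T2Space Y]
    {S : Y → Y} {f : X → Y} (hf : Continuous f) (hfTS : Semiconj f T S) {M : Set X}
    (hM : IsMinimalSet T M) : IsMinimalSet S (f '' M) := by
  refine ⟨hM.1.image f, (hM.2.1.isCompact.image hf).isClosed, hfTS.mapsTo_image hM.2.2.1, ?_⟩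
  intro B hB hBne hBcl hSB
  have hMB : M ∩ f ⁻¹' B = M := by
    refine hM.2.2.2 _ inter_subset_left ?_ (hM.2.1.inter (hBcl.preimage hf)) ?_
    · obtain ⟨b, hb⟩ := hBne
      obtain ⟨m, hm, rfl⟩ := hB hb
      exact ⟨m, hm, hb⟩
    · rintro m ⟨hm, hfm⟩
      exact ⟨hM.2.2.1 hm, show f (T m) ∈ B from hfTS m ▸ hSB hfm⟩
  refine hB.antisymm ?_
  rintro - ⟨m, hm, rfl⟩
  exact (hMB.symm ▸ hm : m ∈ M ∩ f ⁻¹' B).2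

theorem exists_isMinimalSet_subset [CompactSpace X] {C : Set X} (hC : IsClosed C)
    (hne : C.Nonempty) (hTC : MapsTo T C C) : ∃ M ⊆ C, IsMinimalSet T M := by
  let F : Set (Set X) := {D | D.Nonempty ∧ IsClosed D ∧ MapsTo T D D}
  have hF : ∀ c ⊆ F, IsChain (· ⊆ ·) c → c.Nonempty → ∃ D ∈ F, ∀ E ∈ c, D ⊆ E := by
    intro c hcF hchain hcne
    have : Nonempty c := hcne.to_subtype
    refine ⟨⋂₀ c, ⟨?_, isClosed_sInter fun D hD => (hcF hD).2.1, ?_⟩,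
      fun D hD => sInter_subset_of_mem hD⟩
    · exact IsCompact.nonempty_sInter_of_directed_nonempty_isCompact_isClosed
        (fun D hD E hE => (hchain.total hD hE).elim (fun h => ⟨D, hD, le_rfl, h⟩)
          fun h => ⟨E, hE, h, le_rfl⟩) (fun D hD => (hcF hD).1)
        (fun D hD => (hcF hD).2.1.isCompact) (fun D hD => (hcF hD).2.1)
    · exact fun x hx D hD => (hcF hD).2.2 (hx D hD)
  obtain ⟨M, hMC, hM⟩ := zorn_superset_nonempty F hF C ⟨hne, hC, hTC⟩
  exact ⟨M, hMC, hM.1.1, hM.1.2.1, hM.1.2.2, fun B hBM hBne hBcl hTB =>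
    hBM.antisymm (hM.2 ⟨hBne, hBcl, hTB⟩ hBM)⟩

end MinimalSets

theorem exists_isOpen_prod_subset {X Y : Type} [TopologicalSpace X] [TopologicalSpace Y]
    {O : Set (X × Y)} (hO : IsOpen O) (hne : O.Nonempty) :
    ∃ U V, IsOpen U ∧ IsOpen V ∧ U.Nonempty ∧ V.Nonempty ∧ U ×ˢ V ⊆ O := by
  obtain ⟨⟨x, y⟩, hxy⟩ := hne
  obtain ⟨U, V, hU, hV, hx, hy, hUV⟩ := isOpen_prod_iff.1 hO x y hxy
  exact ⟨U, V, hU, hV, ⟨x, hx⟩, ⟨y, hy⟩, hUV⟩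

section ProductMinimal

variable {X Y : Type} [TopologicalSpace X] [CompactSpace X] [T2Space X]
  [TopologicalSpace Y] [CompactSpace Y] [T2Space Y] {T : X → X} {S : Y → Y}

theorem exists_isMinimalPt_prodMap_mem (hT : Continuous T) (hS : Continuous S)
    {A : Set X} {B : Set Y} (hA : IsMinimalSet T A) (hB : IsMinimalSet S B)
    {U : Set X} {V : Set Y} (hV : IsOpen V) {x : X} (hxU : x ∈ U) (hxA : x ∈ A)
    (hVB : (V ∩ B).Nonempty) : ∃ p ∈ U ×ˢ V, IsMinimalPt (Prod.map T S) p := by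
  have hTS : Continuous (Prod.map T S) := hT.prodMap hS
  obtain ⟨M, hMAB, hM⟩ := exists_isMinimalSet_subset (hA.2.1.prod hB.2.1) (hA.1.prod hB.1)
    (hA.2.2.1.prodMap hB.2.2.1)
  have hfst : Prod.fst '' M = A := hA.eq_of_subset (hM.image continuous_fst fun _ => rfl)
    (image_subset_iff.2 fun m hm => (hMAB hm).1)
  obtain ⟨m, hm, rfl⟩ : x ∈ Prod.fst '' M := hfst ▸ hxA
  obtain ⟨n, hn⟩ := hB.exists_iterate_mem hS (hMAB hm).2 hV hVB
  have hsemiconj : Semiconj (Prod.map id S^[n]) (Prod.map T S) (Prod.map T S) :=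
    fun p => Prod.ext rfl (Commute.iterate_self S n p.2)
  exact ⟨(m.1, S^[n] m.2), ⟨hxU, hn⟩, (hM.image (continuous_id.prodMap (hS.iterate n))
    hsemiconj).isMinimalPt hTS ⟨m, hm, rfl⟩⟩

theorem dense_isMinimalPt_prodMap (hT : Continuous T) (hS : Continuous S)
    (hX : Dense {x | IsMinimalPt T x}) (hY : Dense {y | IsMinimalPt S y}) :
    Dense {p | IsMinimalPt (Prod.map T S) p} := by
  refine dense_iff_inter_open.2 fun O hO hne => ?_
  obtain ⟨U, V, hU, hV, hUne, hVne, hUV⟩ := exists_isOpen_prod_subset hO hne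
  obtain ⟨x, hxU, hx⟩ := hX.inter_open_nonempty U hU hUne
  obtain ⟨y, hyV, hy⟩ := hY.inter_open_nonempty V hV hVne
  obtain ⟨p, hp, hpmin⟩ := exists_isMinimalPt_prodMap_mem hT hS hx hy hV hxU
    (subset_closure ⟨0, rfl⟩) ⟨y, hyV, subset_closure ⟨0, rfl⟩⟩
  exact ⟨p, hUV hp, hpmin⟩

end ProductMinimal

section Recurrence

open MeasureTheory

/-- The sets `{z | ∃ n > c, d(Rⁿ z, z) < 1/(k+1)}` are open and, by hypothesis, dense; their
intersection consists of recurrent points and is dense by Baire's theorem. -/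
theorem dense_recurrentPt_of_forall_exists_gt {Z : Type} [MetricSpace Z] [BaireSpace Z]
    {R : Z → Z} (hR : Continuous R)
    (h : ∀ O : Set Z, IsOpen O → O.Nonempty → ∀ c, ∃ n, c < n ∧ (O ∩ R^[n] ⁻¹' O).Nonempty) :
    Dense {z | RecurrentPt R z} := by
  let G : ℕ × ℕ → Set Z := fun kc => ⋃ n > kc.2, {z | dist (R^[n] z) z < 1 / (kc.1 + 1)}
  have hGopen : ∀ kc, IsOpen (G kc) := fun kc => isOpen_biUnion fun n _ =>
    isOpen_lt ((hR.iterate n).dist continuous_id) continuous_const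
  have hGdense : ∀ kc, Dense (G kc) := by
    rintro ⟨k, c⟩
    refine dense_iff_inter_open.2 fun O hO ⟨z, hz⟩ => ?_
    let r : ℝ := 1 / (2 * (k + 1))
    have hr : 0 < r := by positivity
    obtain ⟨n, hcn, x, ⟨hxO, hx⟩, -, hnx⟩ :=
      h (O ∩ Metric.ball z r) (hO.inter Metric.isOpen_ball) ⟨z, hz, Metric.mem_ball_self hr⟩ c
    refine ⟨x, hxO, mem_biUnion hcn ?_⟩
    calc dist (R^[n] x) x ≤ dist (R^[n] x) z + dist x z := dist_triangle_right _ _ _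
      _ < r + r := add_lt_add hnx hx
      _ = 1 / (k + 1) := by simp only [r]; field_simp; ring
  refine (dense_iInter_of_isOpen hGopen hGdense).mono fun z hz U hU => ?_
  obtain ⟨ε, hε, hball⟩ := Metric.mem_nhds_iff.1 hU
  obtain ⟨k, hk⟩ := exists_nat_one_div_lt hε
  refine infinite_of_forall_exists_gt fun c => ?_
  obtain ⟨n, hcn, hn⟩ := mem_iUnion₂.1 (mem_iInter.1 hz (k, c))
  exact ⟨n, hball (hn.trans hk), hcn⟩

/-- The times `q j - q i` are sums of consecutive gaps `g_{i} + ⋯ + g_{j-1}`, where each gap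
`g_k > c` is a return time of `y` to the open set `G k ∋ y`, and
`G (k + 1) = W ∩ S^{-g_k} (G k)`; so `S^{q j - q i}` maps `G j` into `G i ⊆ W`. -/
theorem RecurrentPt.exists_seq_sub_mem_retTimes {Y : Type} [TopologicalSpace Y] {S : Y → Y}
    (hS : Continuous S) {y : Y} (hy : RecurrentPt S y) {W : Set Y} (hW : IsOpen W)
    (hyW : y ∈ W) (c : ℕ) :
    ∃ q : ℕ → ℕ, Monotone q ∧ ∀ i j, i < j → c < q j - q i ∧ q j - q i ∈ retTimes S y W := by
  choose! gap hgap using fun (G : Set Y) (hG : G ∈ 𝓝 y) => (hy G hG).exists_gt c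
  obtain ⟨G, hG0, hGsucc⟩ : ∃ G : ℕ → Set Y, G 0 = W ∧
      ∀ k, G (k + 1) = W ∩ S^[gap (G k)] ⁻¹' G k :=
    ⟨fun k => Nat.rec W (fun _ G' => W ∩ S^[gap G'] ⁻¹' G') k, rfl, fun _ => rfl⟩
  obtain ⟨q, hqsucc⟩ : ∃ q : ℕ → ℕ, ∀ k, q (k + 1) = q k + gap (G k) :=
    ⟨fun k => ∑ l ∈ Finset.range k, gap (G l), fun k => Finset.sum_range_succ _ k⟩
  have hGopen : ∀ k, IsOpen (G k) ∧ y ∈ G k := by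
    intro k
    induction k with
    | zero => exact hG0 ▸ ⟨hW, hyW⟩
    | succ k ih =>
      rw [hGsucc]
      exact ⟨hW.inter (ih.1.preimage (hS.iterate _)), hyW, (hgap _ (ih.1.mem_nhds ih.2)).1⟩
  have hGW : ∀ k, G k ⊆ W := by
    rintro (_ | k)
    · exact hG0.le
    · exact (hGsucc k).trans_le inter_subset_left
  have hqmono : Monotone q :=
    monotone_nat_of_le_succ fun k => (hqsucc k).symm ▸ le_add_right le_rfl
  have hmaps : ∀ i d, MapsTo S^[q (i + d) - q i] (G (i + d)) (G i) := by
    intro i d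
    induction d with
    | zero => simpa using mapsTo_id (G i)
    | succ d ih =>
      have hq : q (i + (d + 1)) - q i = (q (i + d) - q i) + gap (G (i + d)) := by
        have := hqmono (Nat.le_add_right i d)
        rw [← add_assoc, hqsucc]
        omega
      rw [hq, iterate_add, ← add_assoc, hGsucc]
      exact ih.comp fun z hz => hz.2
  refine ⟨q, hqmono, fun i j hij => ⟨?_, ?_⟩⟩
  · have hqj : q (i + 1) ≤ q j := hqmono hij
    have hgap_i : c < gap (G i) := (hgap _ ((hGopen i).1.mem_nhds (hGopen i).2)).2
    rw [hqsucc] at hqj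
    omega
  · obtain ⟨d, rfl⟩ := Nat.exists_eq_add_of_lt hij
    exact hGW i (hmaps i (d + 1) (hGopen _).2)

theorem exists_lt_inter_preimage_iterate_sub_nonempty
    {α : Type} [MeasurableSpace α] {μ : Measure α}
    [IsFiniteMeasure μ] {T : α → α} (hT : MeasurePreserving T μ μ)
    {D : Set α} (hD : MeasurableSet D) (hD0 : μ D ≠ 0) {q : ℕ → ℕ} (hq : Monotone q) :
    ∃ i j, i < j ∧ (D ∩ T^[q j - q i] ⁻¹' D).Nonempty := by
  have hmeas : ∀ i, μ (T^[q i] ⁻¹' D) = μ D := fun i =>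
    (hT.iterate (q i)).measure_preimage hD.nullMeasurableSet
  have hsum : μ univ < ∑' i, μ (T^[q i] ⁻¹' D) := by
    simp only [hmeas, ENNReal.tsum_const_eq_top_of_ne_zero hD0]
    exact measure_lt_top μ univ
  obtain ⟨i, j, hij, x, hxi, hxj⟩ := exists_nonempty_inter_of_measure_univ_lt_tsum_measure μ
    (fun i => (hD.preimage (hT.measurable.iterate _)).nullMeasurableSet) hsum
  have key : ∀ i j, i < j → x ∈ T^[q i] ⁻¹' D → x ∈ T^[q j] ⁻¹' D →
      (D ∩ T^[q j - q i] ⁻¹' D).Nonempty := fun i j hij hxi hxj =>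
    ⟨T^[q i] x, hxi, by
      rwa [mem_preimage, ← iterate_add_apply, Nat.sub_add_cancel (hq hij.le)]⟩
  rcases hij.lt_or_gt with h | h
  · exact ⟨i, j, h, key i j h hxi hxj⟩
  · exact ⟨j, i, h, key j i h hxj hxi⟩

theorem dense_recurrentPt_prodMap_of_measurePreserving {X Y : Type} [MetricSpace X]
    [CompleteSpace X] [MeasurableSpace X] [OpensMeasurableSpace X] [MetricSpace Y]
    [CompleteSpace Y] {T : X → X} {S : Y → Y} (hT : Continuous T) (hS : Continuous S)
    {μ : Measure X} [IsFiniteMeasure μ] [μ.IsOpenPosMeasure]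
    (hμ : MeasurePreserving T μ μ) (hY : Dense {y | RecurrentPt S y}) :
    Dense {p | RecurrentPt (Prod.map T S) p} := by
  refine dense_recurrentPt_of_forall_exists_gt (hT.prodMap hS) fun O hO hne c => ?_
  obtain ⟨D, W, hD, hW, hDne, hWne, hDW⟩ := exists_isOpen_prod_subset hO hne
  obtain ⟨y, hyW, hy⟩ := hY.inter_open_nonempty W hW hWne
  obtain ⟨q, hqmono, hq⟩ := hy.exists_seq_sub_mem_retTimes hS hW hyW c
  obtain ⟨i, j, hij, x, hxD, hTxD⟩ := exists_lt_inter_preimage_iterate_sub_nonempty hμ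
    hD.measurableSet (hD.measure_ne_zero μ hDne) hqmono
  refine ⟨q j - q i, (hq i j hij).1, (x, y), hDW ⟨hxD, hyW⟩, ?_⟩
  rw [mem_preimage, Prod.map_iterate]
  exact hDW ⟨hTxD, (hq i j hij).2⟩

end Recurrence

section SpacingShift

def shift (x : ℕ → Bool) : ℕ → Bool := fun n => x (n + 1)

theorem continuous_shift : Continuous shift :=
  continuous_pi fun n => continuous_apply (n + 1)

theorem shift_iterate_apply (n : ℕ) (x : ℕ → Bool) (t : ℕ) : shift^[n] x t = x (t + n) := by
  induction n generalizing x with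
  | zero => rfl
  | succ n ih => rw [iterate_succ_apply, ih]; rfl

def spacingShift (P : Set ℕ) : Set (ℕ → Bool) :=
  {x | ∀ i j, i < j → x i = true → x j = true → j - i ∈ P}

variable {P : Set ℕ}

theorem isClosed_spacingShift (P : Set ℕ) : IsClosed (spacingShift P) := by
  have : spacingShift P = ⋂ i, ⋂ j, (fun x : ℕ → Bool => (x i, x j)) ⁻¹'
      {b | i < j → b.1 = true → b.2 = true → j - i ∈ P} := by
    ext
    simp [spacingShift]
  rw [this]
  exact isClosed_iInter fun i => isClosed_iInter fun j =>
    (isClosed_discrete _).preimage ((continuous_apply i).prodMk (continuous_apply j))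

theorem mapsTo_shift_spacingShift (P : Set ℕ) :
    MapsTo shift (spacingShift P) (spacingShift P) := fun x hx i j hij hi hj => by
  simpa using hx (i + 1) (j + 1) (by omega) hi hj

theorem surjOn_shift_spacingShift (P : Set ℕ) :
    SurjOn shift (spacingShift P) (spacingShift P) := by
  intro x hx
  refine ⟨fun n => Nat.casesOn n false x, ?_, rfl⟩
  rintro (_ | i) (_ | j) hij hi hj
  · exact absurd hi Bool.false_ne_true
  · exact absurd hi Bool.false_ne_true
  · omega
  · simpa using hx i j (by omega) hi hj

theorem glue_mem_spacingShift {u v : ℕ → Bool} (hu : u ∈ spacingShift P)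
    (hv : v ∈ spacingShift P) {m s : ℕ} (hms : m ≤ s)
    (hP : ∀ d, s - m < d → d < s + m → d ∈ P) :
    (fun t => if t < m then u t else if s ≤ t ∧ t < s + m then v (t - s) else false) ∈
      spacingShift P := by
  intro i j hij hi hj
  simp only at hi hj
  split_ifs at hi hj with hi₁ hj₁ hj₂ hi₂ hj₂
  · exact hu i j hij hi hj
  · exact hP _ (by omega) (by omega)
  · omega
  · simpa [show j - s - (i - s) = j - i by omega] using hv (i - s) (j - s) (by omega) hi hj

/-- The choice of metric is immaterial: only the product topology is used. -/
noncomputable instance : MetricSpace (ℕ → Bool) := TopologicalSpace.metrizableSpaceMetric _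

instance (P : Set ℕ) : CompactSpace (spacingShift P) :=
  isCompact_iff_compactSpace.mp (isClosed_spacingShift P).isCompact

def spacingShiftMap (P : Set ℕ) : spacingShift P → spacingShift P :=
  (mapsTo_shift_spacingShift P).restrict _ _ _

theorem continuous_spacingShiftMap (P : Set ℕ) : Continuous (spacingShiftMap P) :=
  continuous_shift.restrict _

theorem surjective_spacingShiftMap (P : Set ℕ) : Surjective (spacingShiftMap P) :=
  (mapsTo_shift_spacingShift P).restrict_surjective_iff.2 (surjOn_shift_spacingShift P)

theorem spacingShiftMap_iterate_apply (n : ℕ) (x : spacingShift P) (t : ℕ) :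
    ((spacingShiftMap P)^[n] x : ℕ → Bool) t = (x : ℕ → Bool) (t + n) := by
  rw [spacingShiftMap, MapsTo.coe_iterate_restrict, shift_iterate_apply]

theorem exists_forall_lt_eq_imp_mem {s : Set (ℕ → Bool)} {u : s} {U : Set s} (hU : U ∈ 𝓝 u) :
    ∃ m, ∀ z : s, (∀ t < m, (z : ℕ → Bool) t = (u : ℕ → Bool) t) → z ∈ U := by
  obtain ⟨U', hU', hU'U⟩ := (mem_nhds_subtype s u U).1 hU
  obtain ⟨-, ⟨x, m, rfl⟩, hux, hxU'⟩ :=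
    (PiNat.isTopologicalBasis_cylinders fun _ => Bool).mem_nhds_iff.1 hU'
  refine ⟨m, fun z hz => hU'U (hxU' ?_)⟩
  rw [← PiNat.mem_cylinder_iff_eq.1 hux]
  exact hz

/-- A word `u` on `[0, m)` and a word `v` on `[s, s + m)` can be glued in `spacingShift P`
since all the distances between their positions lie in the run `(s - m, s + m)` of `P`. -/
theorem transitiveSys_spacingShiftMap (hP : Thick P) : TransitiveSys (spacingShiftMap P) := by
  rintro U V hU hV ⟨u, hu⟩ ⟨v, hv⟩
  obtain ⟨mu, hmu⟩ := exists_forall_lt_eq_imp_mem (hU.mem_nhds hu)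
  obtain ⟨mv, hmv⟩ := exists_forall_lt_eq_imp_mem (hV.mem_nhds hv)
  set m := max mu mv
  refine infinite_of_forall_exists_gt fun b => ?_
  obtain ⟨a, ha⟩ := hP (2 * m + b + 1)
  set s := a + m + b + 1
  have hs : ∀ d, s - m < d → d < s + m → d ∈ P := fun d h₁ h₂ => by
    simpa [show a + (d - a) = d by omega] using ha (d - a) (by omega)
  let w : spacingShift P := ⟨_, glue_mem_spacingShift u.2 v.2 (by omega) hs⟩
  refine ⟨s, ⟨w, hmu w fun t ht => ?_, hmv _ fun t ht => ?_⟩, by omega⟩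
  · simp [w, show t < m by omega]
  · rw [spacingShiftMap_iterate_apply]
    simp [w, show ¬ t + s < m by omega, show t + s < s + m by omega]

theorem not_dense_recurrentPt_prodMap_spacingShiftMap {P Q : Set ℕ} (hPQ : Disjoint P Q) :
    ¬ Dense {p | RecurrentPt (Prod.map (spacingShiftMap P) (spacingShiftMap Q)) p} := by
  intro hD
  let O : Set (ℕ → Bool) := (fun x => x 0) ⁻¹' {true}
  have hO : IsOpen O := (isOpen_discrete _).preimage (continuous_apply 0)
  have hOO : IsOpen ((Subtype.val ⁻¹' O) ×ˢ (Subtype.val ⁻¹' O) :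
      Set (spacingShift P × spacingShift Q)) :=
    (hO.preimage continuous_subtype_val).prod (hO.preimage continuous_subtype_val)
  have he : ∀ R, (fun n => decide (n = 0)) ∈ spacingShift R := fun R i j hij hi hj => by
    simp at hi hj
    omega
  obtain ⟨⟨x, y⟩, ⟨hx, hy⟩, hrec⟩ :=
    hD.inter_open_nonempty _ hOO ⟨(⟨_, he P⟩, ⟨_, he Q⟩), rfl, rfl⟩
  obtain ⟨n, hn, hn0⟩ := (hrec _ (hOO.mem_nhds ⟨hx, hy⟩)).exists_gt 0
  simp only [retTimes, Prod.map_iterate, Prod.map_fst, Prod.map_snd, mem_ofPred_eq, mem_prod,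
    mem_preimage, mem_singleton_iff, O, spacingShiftMap_iterate_apply, zero_add] at hn
  -- two `1`s at distance `n` in both coordinates force `n ∈ P ∩ Q`
  exact hPQ.ne_of_mem (by simpa using x.2 0 n hn0 hx hn.1) (by simpa using y.2 0 n hn0 hy hn.2)
    rfl

theorem thick_setOf_log_mem {R : Set ℕ} (hR : R.Infinite) : Thick {n | Nat.log 2 n ∈ R} := by
  intro n
  obtain ⟨k, hk, hnk⟩ := hR.exists_gt n
  have : n < 2 ^ k := hnk.trans Nat.lt_two_pow_self
  refine ⟨2 ^ k, fun i hi => ?_⟩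
  have hlog : Nat.log 2 (2 ^ k + i) = k :=
    Nat.log_eq_of_pow_le_of_lt_pow (by omega) (by rw [pow_succ]; omega)
  rwa [mem_ofPred_eq, hlog]

end SpacingShift

/-- (1) products of systems with dense minimal points have dense minimal
points; (2) if `X` carries an invariant Borel probability measure with full support and
`Y` has dense recurrent points, then `X × Y` has dense recurrent points; (3) there are
transitive systems whose product has no dense set of recurrent points. -/
theorem statement_15 :
    (∀ (X Y : Type) [MetricSpace X] [CompactSpace X] [MetricSpace Y] [CompactSpace Y]
      (T : X → X) (S : Y → Y),
        Continuous T → Function.Surjective T → Continuous S → Function.Surjective S →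
        Dense {x : X | IsMinimalPt T x} → Dense {y : Y | IsMinimalPt S y} →
        Dense {p : X × Y | IsMinimalPt (Prod.map T S) p}) ∧
    (∀ (X Y : Type) [MetricSpace X] [CompactSpace X] [MeasurableSpace X] [BorelSpace X]
      [MetricSpace Y] [CompactSpace Y] (T : X → X) (S : Y → Y),
        Continuous T → Function.Surjective T → Continuous S → Function.Surjective S →
        (∃ μ : MeasureTheory.Measure X, MeasureTheory.IsProbabilityMeasure μ ∧
          (∀ B : Set X, MeasurableSet B → μ (T ⁻¹' B) = μ B) ∧
          ∀ U : Set X, IsOpen U → U.Nonempty → 0 < μ U) →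
        Dense {y : Y | RecurrentPt S y} →
        Dense {p : X × Y | RecurrentPt (Prod.map T S) p}) ∧
    (∃ (X Y : Type) (_ : MetricSpace X) (_ : CompactSpace X)
      (_ : MetricSpace Y) (_ : CompactSpace Y) (T : X → X) (S : Y → Y),
        Continuous T ∧ Function.Surjective T ∧ Continuous S ∧ Function.Surjective S ∧
        TransitiveSys T ∧ TransitiveSys S ∧
        ¬ Dense {p : X × Y | RecurrentPt (Prod.map T S) p}) := by
  refine ⟨fun X Y _ _ _ _ T S hT _ hS _ hX hY => dense_isMinimalPt_prodMap hT hS hX hY,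
    fun X Y _ _ _ _ _ _ T S hT _ hS _ ⟨μ, _, hμT, hμU⟩ hY => ?_, ?_⟩
  · have : μ.IsOpenPosMeasure := ⟨fun U hU hne => (hμU U hU hne).ne'⟩
    have hμ : MeasureTheory.MeasurePreserving T μ μ := ⟨hT.measurable,
      MeasureTheory.Measure.ext fun B hB => by
        rw [MeasureTheory.Measure.map_apply hT.measurable hB, hμT B hB]⟩
    exact dense_recurrentPt_prodMap_of_measurePreserving hT hS hμ hY
  · let P : Set ℕ := {n | Nat.log 2 n ∈ {k | Even k}}
    let Q : Set ℕ := {n | Nat.log 2 n ∈ {k | ¬ Even k}}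
    have hP : Thick P := thick_setOf_log_mem <| infinite_of_forall_exists_gt fun a =>
      ⟨2 * a + 2, ⟨a + 1, by ring⟩, by omega⟩
    have hQ : Thick Q := thick_setOf_log_mem <| infinite_of_forall_exists_gt fun a =>
      ⟨2 * a + 1, Nat.not_even_iff_odd.2 (odd_two_mul_add_one a), by omega⟩
    exact ⟨spacingShift P, spacingShift Q, inferInstance, inferInstance, inferInstance,
      inferInstance, spacingShiftMap P, spacingShiftMap Q, continuous_spacingShiftMap P,
      surjective_spacingShiftMap P, continuous_spacingShiftMap Q, surjective_spacingShiftMap Q,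
      transitiveSys_spacingShiftMap hP, transitiveSys_spacingShiftMap hQ,
      not_dense_recurrentPt_prodMap_spacingShiftMap (disjoint_left.2 fun _ hnP hnQ => hnQ hnP)⟩

end PaperFormal
end

section
/- Let π : (X,T) → (Y,S) be a factor map between topological dynamical systems. If the set of minimal points of X is dense in X and π is proximal (every pair (x,x') with π(x) = π(x') is proximal), then π is a minimal extension: the only closed T-invariant subset K ⊆ X with π(K) = Y is X itself. -/
open Set Filter Topology Function

namespace PaperFormal

/-- a proximal factor map with dense minimal points upstairs is a minimal
extension. -/
theorem statement_16 {X Y : Type} [MetricSpace X] [CompactSpace X]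
    [MetricSpace Y] [CompactSpace Y]
    (T : X → X) (hTc : Continuous T) (hTs : Function.Surjective T)
    (S : Y → Y) (hSc : Continuous S) (hSs : Function.Surjective S)
    (π : X → Y) (hπc : Continuous π) (hπs : Function.Surjective π)
    (hsemi : ∀ x : X, π (T x) = S (π x))
    (hdense : Dense {x : X | IsMinimalPt T x})
    (hprox : ∀ x x' : X, π x = π x' → ProximalPair T x x') :
    ∀ K : Set X, IsClosed K → Set.MapsTo T K K → π '' K = Set.univ → K = Set.univ := by
  intro K hKc hKm hKπ
  -- Every minimal point lies in K.
  have hsub : {x : X | IsMinimalPt T x} ⊆ K := by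
    intro x hx
    -- find x' ∈ K with π x' = π x
    have hmem : π x ∈ π '' K := by rw [hKπ]; trivial
    obtain ⟨x', hx'K, hπx'⟩ := hmem
    obtain ⟨u, z, hzx, hzx'⟩ := hprox x x' hπx'.symm
    -- z ∈ K
    have hzK : z ∈ K :=
      hKc.mem_of_tendsto hzx'
        (Filter.Eventually.of_forall fun i => (hKm.iterate (u i)) hx'K)
    -- z ∈ orbitClosure T x
    have hzO : z ∈ orbitClosure T x := by
      refine isClosed_closure.mem_of_tendsto hzx
        (Filter.Eventually.of_forall fun i => subset_closure ⟨u i, rfl⟩)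
    -- orbitClosure T x is T-invariant
    have hinv : ∀ w : X, Set.MapsTo T (orbitClosure T w) (orbitClosure T w) := by
      intro w y hy
      have h1 : T y ∈ closure (T '' Set.range fun n : ℕ => T^[n] w) :=
        image_closure_subset_closure_image hTc ⟨y, hy, rfl⟩
      refine closure_mono ?_ h1
      rintro _ ⟨_, ⟨n, rfl⟩, rfl⟩
      exact ⟨n + 1, by simp [Function.iterate_succ_apply']⟩
    -- orbit of z lies in orbitClosure T x
    have horb : ∀ n : ℕ, T^[n] z ∈ orbitClosure T x := by
      intro n
      induction n with
      | zero => exact hzO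
      | succ n ih =>
        rw [Function.iterate_succ_apply']
        exact hinv x ih
    have hOz_sub : orbitClosure T z ⊆ orbitClosure T x := by
      refine closure_minimal ?_ isClosed_closure
      rintro _ ⟨n, rfl⟩; exact horb n
    -- by minimality of x, orbitClosure T z = orbitClosure T x
    obtain ⟨hne, hcl, hmt, hmin⟩ := hx
    have heq : orbitClosure T z = orbitClosure T x := by
      refine hmin _ hOz_sub ⟨z, subset_closure ⟨0, rfl⟩⟩ isClosed_closure (hinv z)
    have hxO : x ∈ orbitClosure T z := by
      rw [heq]; exact subset_closure ⟨0, rfl⟩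
    -- orbitClosure T z ⊆ K
    have horbK : ∀ n : ℕ, T^[n] z ∈ K := fun n => (hKm.iterate n) hzK
    have : orbitClosure T z ⊆ K := by
      refine closure_minimal ?_ hKc
      rintro _ ⟨n, rfl⟩; exact horbK n
    exact this hxO
  have : Dense K := hdense.mono hsub
  rw [← hKc.closure_eq]
  exact this.closure_eq

end PaperFormal
end
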